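/- arXiv:2507.17246 — 2 statements merged into one kernel-verified Lean document; each statement's English description precedes it below -/
import Mathlib

section
/- Let G be a finite simple graph and let P : v w₁ w₂ … w_k be a pendant path of G of length k ≥ 2 (so the degree of v in G is at least 3, the internal vertices w₁, …, w_{k−1} have degree 2, and w_k has degree 1). Then the sum of the Euler Sombor edge-weights over the edges of P satisfies Σ_{v_i v_j ∈ E(P)} √(d_i² + d_j² + d_i d_j) ≥ √19 + (k−2)√12 + √7 > k√12, where degrees d_i are taken in G. -/
open scoped Classical

/-!
Along a pendant path of length `k` the degree sequence is `d₀ ≥ 3, 2, …, 2, 1`, so the edge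
weights are `√(d₀² + 2d₀ + 4) ≥ √19` on the first edge, `√12` on each of the `k - 2` inner
edges and `√7` on the last one. The strict comparison with `k√12` is `√19 + √7 > 2√12`,
which after squaring reduces to `√133 > 11`.
-/

noncomputable def eulerSomborWeight (a b : ℝ) : ℝ :=
  Real.sqrt (a ^ 2 + b ^ 2 + a * b)

lemma sqrt_nineteen_le_eulerSomborWeight_two {a : ℝ} (ha : 3 ≤ a) :
    Real.sqrt 19 ≤ eulerSomborWeight a 2 :=
  Real.sqrt_le_sqrt (by nlinarith)

lemma eulerSomborWeight_two_two : eulerSomborWeight 2 2 = Real.sqrt 12 := by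
  norm_num [eulerSomborWeight]

lemma eulerSomborWeight_two_one : eulerSomborWeight 2 1 = Real.sqrt 7 := by
  norm_num [eulerSomborWeight]

lemma two_mul_sqrt_twelve_lt_sqrt_nineteen_add_sqrt_seven :
    2 * Real.sqrt 12 < Real.sqrt 19 + Real.sqrt 7 := by
  have h11 : (11 : ℝ) < Real.sqrt 19 * Real.sqrt 7 := by
    rw [← Real.sqrt_mul (by norm_num), Real.lt_sqrt (by norm_num)]
    norm_num
  nlinarith [Real.sq_sqrt (show (19 : ℝ) ≥ 0 by norm_num),
    Real.sq_sqrt (show (7 : ℝ) ≥ 0 by norm_num),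
    Real.sq_sqrt (show (12 : ℝ) ≥ 0 by norm_num),
    Real.sqrt_nonneg (19 : ℝ), Real.sqrt_nonneg (7 : ℝ), Real.sqrt_nonneg (12 : ℝ)]

lemma sum_eulerSomborWeight_pendant_ge {k : ℕ} (hk : 2 ≤ k) {d : ℕ → ℝ} (h0 : 3 ≤ d 0)
    (hmid : ∀ i, 0 < i → i < k → d i = 2) (hend : d k = 1) :
    Real.sqrt 19 + ((k : ℝ) - 2) * Real.sqrt 12 + Real.sqrt 7 ≤
      ∑ i ∈ Finset.range k, eulerSomborWeight (d i) (d (i + 1)) := by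
  obtain ⟨m, rfl⟩ : ∃ m, k = m + 2 := ⟨k - 2, by omega⟩
  have hfirst : Real.sqrt 19 ≤ eulerSomborWeight (d 0) (d 1) := by
    rw [hmid 1 one_pos (by omega)]
    exact sqrt_nineteen_le_eulerSomborWeight_two h0
  have hinner : ∀ i ∈ Finset.range m,
      eulerSomborWeight (d (i + 1)) (d (i + 1 + 1)) = Real.sqrt 12 := by
    intro i hi
    have hi := Finset.mem_range.mp hi
    rw [hmid (i + 1) (by omega) (by omega), hmid (i + 1 + 1) (by omega) (by omega),
      eulerSomborWeight_two_two]
  have hlast : eulerSomborWeight (d (m + 1)) (d (m + 1 + 1)) = Real.sqrt 7 := by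
    rw [hmid (m + 1) (by omega) (by omega), hend, eulerSomborWeight_two_one]
  rw [Finset.sum_range_succ, Finset.sum_range_succ', Finset.sum_congr rfl hinner,
    Finset.sum_const, Finset.card_range, nsmul_eq_mul, hlast]
  push_cast
  linarith

theorem eus_pendant_path_bound_general {V : Type*} [Fintype V] (G : SimpleGraph V) (k : ℕ)
    (hk : 2 ≤ k) (c : ℕ → V)
    (hdeg0 : 3 ≤ G.degree (c 0))
    (hdegmid : ∀ i, 0 < i → i < k → G.degree (c i) = 2)
    (hdegend : G.degree (c k) = 1) :
    Real.sqrt 19 + ((k : ℝ) - 2) * Real.sqrt 12 + Real.sqrt 7 ≤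
      ∑ i ∈ Finset.range k,
        Real.sqrt ((G.degree (c i) : ℝ)^2 + (G.degree (c (i + 1)) : ℝ)^2 +
          (G.degree (c i) : ℝ) * (G.degree (c (i + 1)) : ℝ)) ∧
    (k : ℝ) * Real.sqrt 12 <
      Real.sqrt 19 + ((k : ℝ) - 2) * Real.sqrt 12 + Real.sqrt 7 := by
  refine ⟨sum_eulerSomborWeight_pendant_ge (d := fun i => (G.degree (c i) : ℝ)) hk
    (by exact_mod_cast hdeg0) (fun i hi hik => by simp [hdegmid i hi hik])
    (by simp [hdegend]), ?_⟩
  linarith [two_mul_sqrt_twelve_lt_sqrt_nineteen_add_sqrt_seven]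

/-- Let `P : v = c 0, w₁ = c 1, …, w_k = c k` be a pendant path of length `k ≥ 2` in a finite
simple graph `G` (an induced path with `deg(v) ≥ 3`, internal degrees `2`, and `deg(w_k) = 1`).
Then the sum of the Euler Sombor edge-weights `√(d_i² + d_j² + d_i d_j)` over the `k` edges of
`P` is at least `√19 + (k-2)√12 + √7`, which in turn is greater than `k√12`. -/
theorem eus_pendant_path_bound {V : Type*} [Fintype V] (G : SimpleGraph V) (k : ℕ)
    (hk : 2 ≤ k) (c : ℕ → V)
    (hinj : Set.InjOn c (Set.Iic k))
    (hadj : ∀ i < k, G.Adj (c i) (c (i + 1)))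
    (hind : ∀ i ≤ k, ∀ j ≤ k, G.Adj (c i) (c j) → j = i + 1 ∨ i = j + 1)
    (hdeg0 : 3 ≤ G.degree (c 0))
    (hdegmid : ∀ i, 0 < i → i < k → G.degree (c i) = 2)
    (hdegend : G.degree (c k) = 1) :
    Real.sqrt 19 + ((k : ℝ) - 2) * Real.sqrt 12 + Real.sqrt 7 ≤
      ∑ i ∈ Finset.range k,
        Real.sqrt ((G.degree (c i) : ℝ)^2 + (G.degree (c (i + 1)) : ℝ)^2 +
          (G.degree (c i) : ℝ) * (G.degree (c (i + 1)) : ℝ)) ∧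
    (k : ℝ) * Real.sqrt 12 <
      Real.sqrt 19 + ((k : ℝ) - 2) * Real.sqrt 12 + Real.sqrt 7 :=
  eus_pendant_path_bound_general G k hk c hdeg0 hdegmid hdegend
end

section
/- Let n > p ≥ 1 with n − p ≥ 2, and let a₁, a₂, …, a_{n−p} be nonnegative integers with a₁ + a₂ + ⋯ + a_{n−p} = p and a₁ = max_k a_k < p. Let H = S(a₁, …, a_{n−p}) be the graph obtained from the complete graph K_{n−p} by attaching aₖ pendant vertices to its k-th vertex, and let H′ = S(a₁+1, a₂, …, a_{i−1}, aᵢ−1, a_{i+1}, …, a_{n−p}) for some index i with aᵢ ≥ 1. Then EUS(H′) > EUS(H). -/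
open scoped Classical

noncomputable def eusWeight {V : Type*} [Fintype V] (G : SimpleGraph V) : Sym2 V → ℝ :=
  Sym2.lift ⟨fun i j => Real.sqrt ((G.degree i : ℝ)^2 + (G.degree j : ℝ)^2 +
      (G.degree i : ℝ) * (G.degree j : ℝ)),
    fun i j => by ring_nf⟩

/-- The Euler Sombor index of a finite simple graph:
`EUS(G) = Σ_{v_i v_j ∈ E(G)} √(d_i² + d_j² + d_i d_j)`. -/
noncomputable def EUS {V : Type*} [Fintype V] (G : SimpleGraph V) : ℝ :=
  ∑ e ∈ G.edgeFinset, eusWeight G e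

/-- Offset of the pendant vertices attached to the `k`-th clique vertex in `Sgraph`:
the pendants attached to clique vertex `k` are the vertices `n-p+r` for
`pendOffset a k ≤ r < pendOffset a k + a k`. -/
def pendOffset {q : ℕ} (a : Fin q → ℕ) (k : Fin q) : ℕ :=
  ∑ s ∈ Finset.univ.filter (fun s => s < k), a s

/-- `Sgraph n p a` : the graph `S(a₁, …, a_{n-p})` of order `n` obtained from the complete
graph on the vertices `0, …, n-p-1` by attaching `a k` pendant vertices to its `k`-th vertex,
for each `k`; the pendant vertices are `n-p, …, n-1` (assuming `∑ k, a k = p`). -/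
def Sgraph (n p : ℕ) (a : Fin (n - p) → ℕ) : SimpleGraph (Fin n) :=
  SimpleGraph.fromRel (fun i j =>
    (i.val < n - p ∧ j.val < n - p) ∨
    (∃ k : Fin (n - p), i.val = k.val ∧ n - p ≤ j.val ∧
      pendOffset a k ≤ j.val - (n - p) ∧ j.val - (n - p) < pendOffset a k + a k))

/-!
`EUS(S(a))` depends only on the clique degrees `dₖ = m + aₖ` (`m = n - p - 1`): counting each
edge from both ends, `2 EUS = Σ_{k ≠ l} W(dₖ, dₗ) + 2 Σₖ aₖ W(dₖ, 1)` with
`W(x, y) = √(x² + y² + xy)`. As `W(x, c) = |x + c/2 + i√3c/2|`, every `W(·, c)` is convex, so its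
unit increments grow with `x`. Moving a pendant from `v` to `u` with `d_v ≤ d_u` therefore
decreases neither `W(d_u, c) + W(d_v, c)` for any `c` nor `a_u W(d_u, 1) + a_v W(d_v, 1)`, and
the clique edge `uv` strictly gains, since `W(x + 1, y - 1)² - W(x, y)² = x - y + 1`.
-/

open Finset SimpleGraph

noncomputable def eusTerm (x y : ℝ) : ℝ := √(x ^ 2 + y ^ 2 + x * y)

lemma eusTerm_comm (x y : ℝ) : eusTerm x y = eusTerm y x := by
  unfold eusTerm; ring_nf

lemma eusTerm_eq_norm (x c : ℝ) :
    eusTerm x c = ‖((x + c / 2 : ℝ) : ℂ) + (√3 * c / 2 : ℝ) * Complex.I‖ := by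
  rw [Complex.norm_add_mul_I, eusTerm, div_pow, mul_pow, Real.sq_sqrt (by norm_num)]
  ring_nf

lemma convexOn_eusTerm_left (c : ℝ) : ConvexOn ℝ Set.univ (eusTerm · c) := by
  refine ⟨convex_univ, fun x _ y _ s t hs ht hst => ?_⟩
  simp only [eusTerm_eq_norm, smul_eq_mul]
  set w : ℂ := (√3 * c / 2 : ℝ) * Complex.I
  have hcomb : (((s * x + t * y + c / 2 : ℝ)) : ℂ) + w
      = (s : ℂ) * (((x + c / 2 : ℝ) : ℂ) + w) + (t : ℂ) * (((y + c / 2 : ℝ) : ℂ) + w) := by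
    have : (s : ℂ) + t = 1 := by exact_mod_cast hst
    push_cast
    linear_combination (-(c / 2 : ℂ) - w) * this
  rw [hcomb]
  refine (norm_add_le _ _).trans_eq ?_
  rw [norm_mul, norm_mul, Complex.norm_real, Complex.norm_real, Real.norm_of_nonneg hs,
    Real.norm_of_nonneg ht]

lemma ConvexOn.add_one_sub_le_add_one_sub {f : ℝ → ℝ} (hf : ConvexOn ℝ Set.univ f) {t s : ℝ}
    (hts : t ≤ s) : f (t + 1) - f t ≤ f (s + 1) - f s := by
  have h₁ := hf.secant_mono (a := t) (Set.mem_univ _) (Set.mem_univ (t + 1))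
    (Set.mem_univ (s + 1)) (by linarith) (by linarith) (by linarith)
  have h₂ := hf.secant_mono (a := s + 1) (Set.mem_univ _) (Set.mem_univ t)
    (Set.mem_univ s) (by linarith) (by linarith) hts
  rw [add_sub_cancel_left, div_one] at h₁
  rw [show s - (s + 1) = -1 by ring, div_neg, div_one, neg_sub,
    ← neg_sub (f (s + 1)), ← neg_sub (s + 1) t, neg_div_neg_eq] at h₂
  linarith

lemma eusTerm_add_eusTerm_le (c : ℝ) {x y : ℝ} (h : y ≤ x + 1) :
    eusTerm x c + eusTerm y c ≤ eusTerm (x + 1) c + eusTerm (y - 1) c := by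
  have := (convexOn_eusTerm_left c).add_one_sub_le_add_one_sub (show y - 1 ≤ x by linarith)
  rw [sub_add_cancel] at this
  linarith

lemma eusTerm_lt_eusTerm_add_one_sub_one {x y : ℝ} (h : y ≤ x) :
    eusTerm x y < eusTerm (x + 1) (y - 1) :=
  Real.sqrt_lt_sqrt (by nlinarith [sq_nonneg (x + y)]) (by nlinarith)

lemma eusTerm_le_eusTerm_left {c t s : ℝ} (hc : 0 ≤ c) (ht : 0 ≤ t) (hts : t ≤ s) :
    eusTerm t c ≤ eusTerm s c :=
  Real.sqrt_le_sqrt (by nlinarith)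

lemma mul_eusTerm_add_mul_eusTerm_le {m x y : ℝ} (hm : 0 ≤ m) (hy : 1 ≤ y) (hyx : y ≤ x) :
    x * eusTerm (m + x) 1 + y * eusTerm (m + y) 1 ≤
      (x + 1) * eusTerm (m + (x + 1)) 1 + (y - 1) * eusTerm (m + (y - 1)) 1 := by
  have hincr := (convexOn_eusTerm_left 1).add_one_sub_le_add_one_sub
    (show m + (y - 1) ≤ m + x by linarith)
  rw [show m + (y - 1) + 1 = m + y by ring] at hincr
  have hmono := eusTerm_le_eusTerm_left zero_le_one (show 0 ≤ m + y by linarith)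
    (show m + y ≤ m + x + 1 by linarith)
  have hincr_nonneg := eusTerm_le_eusTerm_left zero_le_one (show 0 ≤ m + (y - 1) by linarith)
    (show m + (y - 1) ≤ m + y by linarith)
  rw [← add_assoc]
  nlinarith [mul_le_mul (show y - 1 ≤ x by linarith) hincr (by linarith) (by linarith)]

section Shift
variable {ι : Type*} [Fintype ι] [DecidableEq ι] {u v : ι}

theorem Finset.sum_eq_add_add_sum_compl_pair {M : Type*} [AddCommMonoid M] (huv : u ≠ v)
    (f : ι → M) : ∑ k, f k = f u + f v + ∑ k ∈ {u, v}ᶜ, f k := by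
  rw [← sum_pair huv, sum_add_sum_compl]

variable {d d' : ι → ℝ}

theorem sum_sum_erase_eusTerm_lt_of_shift (huv : u ≠ v) (hu : d' u = d u + 1)
    (hv : d' v = d v - 1) (hrest : ∀ k ∈ ({u, v} : Finset ι)ᶜ, d' k = d k) (hvu : d v ≤ d u) :
    ∑ k, ∑ l ∈ univ.erase k, eusTerm (d k) (d l) <
      ∑ k, ∑ l ∈ univ.erase k, eusTerm (d' k) (d' l) := by
  -- Split all sums into the terms at `u`, `v` and the rest; the diagonal terms then cancel.
  simp only [sum_erase_eq_sub (mem_univ _), sum_sub_distrib,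
    sum_eq_add_add_sum_compl_pair huv, hu, hv]
  simp +contextual only [hrest]
  have hrow (c : ℝ) : eusTerm (d u) c + eusTerm (d v) c ≤
      eusTerm (d u + 1) c + eusTerm (d v - 1) c :=
    eusTerm_add_eusTerm_le c (by linarith)
  have hrows := sum_le_sum fun l (_ : l ∈ ({u, v} : Finset ι)ᶜ) => hrow (d l)
  have hcols : ∑ k ∈ ({u, v} : Finset ι)ᶜ,
        (eusTerm (d k) (d u) + eusTerm (d k) (d v) + ∑ l ∈ {u, v}ᶜ, eusTerm (d k) (d l)) ≤
      ∑ k ∈ ({u, v} : Finset ι)ᶜ,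
        (eusTerm (d k) (d u + 1) + eusTerm (d k) (d v - 1) + ∑ l ∈ {u, v}ᶜ, eusTerm (d k) (d l)) :=
    sum_le_sum fun k _ => by
      rw [eusTerm_comm (d k) (d u), eusTerm_comm (d k) (d v), eusTerm_comm (d k) (d u + 1),
        eusTerm_comm (d k) (d v - 1)]
      linarith [hrow (d k)]
  simp only [sum_add_distrib] at hrows
  linarith [eusTerm_lt_eusTerm_add_one_sub_one hvu, eusTerm_comm (d v) (d u),
    eusTerm_comm (d v - 1) (d u + 1)]

theorem sum_mul_eusTerm_le_of_shift {m : ℝ} (hm : 0 ≤ m) (huv : u ≠ v) (hu : d' u = d u + 1)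
    (hv : d' v = d v - 1) (hrest : ∀ k ∈ ({u, v} : Finset ι)ᶜ, d' k = d k) (hvu : d v ≤ d u)
    (hv₁ : 1 ≤ d v) :
    ∑ k, d k * eusTerm (m + d k) 1 ≤ ∑ k, d' k * eusTerm (m + d' k) 1 := by
  simp only [sum_eq_add_add_sum_compl_pair huv, hu, hv]
  simp +contextual only [hrest]
  linarith [mul_eusTerm_add_mul_eusTerm_le hm hv₁ hvu]

noncomputable def sgraphEUS (m : ℝ) (b : ι → ℝ) : ℝ :=
  (∑ k, ∑ l ∈ univ.erase k, eusTerm (m + b k) (m + b l)) / 2 + ∑ k, b k * eusTerm (m + b k) 1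

theorem sgraphEUS_lt_of_shift {m : ℝ} (hm : 0 ≤ m) (huv : u ≠ v) (hu : d' u = d u + 1)
    (hv : d' v = d v - 1) (hrest : ∀ k ∈ ({u, v} : Finset ι)ᶜ, d' k = d k) (hvu : d v ≤ d u)
    (hv₁ : 1 ≤ d v) :
    sgraphEUS m d < sgraphEUS m d' := by
  have hclique := sum_sum_erase_eusTerm_lt_of_shift (d := (m + d ·)) (d' := (m + d' ·)) huv
    (by simp only [hu]; ring) (by simp only [hv]; ring)
    (fun k hk => by simp only [hrest k hk]) (by linarith)
  have hpendant := sum_mul_eusTerm_le_of_shift hm huv hu hv hrest hvu hv₁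
  rw [sgraphEUS, sgraphEUS]
  linarith

end Shift

lemma eusWeight_mk {V : Type*} [Fintype V] (G : SimpleGraph V) (i j : V) :
    eusWeight G s(i, j) = eusTerm (G.degree i) (G.degree j) := rfl

theorem SimpleGraph.sum_sum_neighborFinset_eq_two_nsmul {V M : Type*} [Fintype V] [DecidableEq V]
    [AddCommMonoid M] (G : SimpleGraph V) [DecidableRel G.Adj] (f : Sym2 V → M) :
    ∑ v, ∑ w ∈ G.neighborFinset v, f s(v, w) = 2 • ∑ e ∈ G.edgeFinset, f e := by
  have by_edge : ∑ d : G.Dart, f d.edge = 2 • ∑ e ∈ G.edgeFinset, f e := by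
    rw [← sum_fiberwise_of_maps_to (g := Dart.edge) (t := G.edgeFinset)
      (fun d _ => by simp), smul_sum]
    refine sum_congr rfl fun e he => ?_
    rw [sum_congr rfl fun d hd => congrArg f (mem_filter.mp hd).2, sum_const,
      G.dart_edge_fiber_card e (mem_edgeFinset.mp he)]
  have by_fst : ∑ d : G.Dart, f d.edge = ∑ v, ∑ w ∈ G.neighborFinset v, f s(v, w) := by
    rw [← sum_fiberwise_of_maps_to (g := fun d : G.Dart => d.fst) (t := univ)
      (fun d _ => mem_univ _)]
    refine sum_congr rfl fun v _ => sum_bij' (fun d _ => d.snd)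
      (fun w hw => ⟨(v, w), (G.mem_neighborFinset v w).mp hw⟩) ?_ ?_ ?_ ?_ ?_
    · rintro d hd
      rw [(mem_filter.mp hd).2.symm]
      exact (G.mem_neighborFinset _ _).mpr d.adj
    · simp
    · rintro d hd
      exact Dart.ext _ _ (Prod.ext (mem_filter.mp hd).2.symm rfl)
    · exact fun _ _ => rfl
    · rintro d hd
      rw [← (mem_filter.mp hd).2]
      rfl
  rw [← by_fst, by_edge]

section pendOffset
variable {q : ℕ} (a : Fin q → ℕ)

lemma pendOffset_add_eq_sum_Iic (k : Fin q) : pendOffset a k + a k = ∑ s ∈ Iic k, a s := by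
  rw [pendOffset, filter_gt_eq_Iio, ← Iio_insert, sum_insert notMem_Iio_self, add_comm]

lemma pendOffset_add_le_sum (k : Fin q) : pendOffset a k + a k ≤ ∑ s, a s := by
  rw [pendOffset_add_eq_sum_Iic]
  exact sum_le_sum_of_subset (subset_univ _)

lemma pendOffset_add_le_pendOffset {k l : Fin q} (h : k < l) :
    pendOffset a k + a k ≤ pendOffset a l := by
  rw [pendOffset_add_eq_sum_Iic, pendOffset, filter_gt_eq_Iio]
  exact sum_le_sum_of_subset fun s hs => mem_Iio.mpr ((mem_Iic.mp hs).trans_lt h)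

lemma eq_of_pendOffset_le_of_lt {t : ℕ} {k l : Fin q}
    (hk : pendOffset a k ≤ t) (hk' : t < pendOffset a k + a k)
    (hl : pendOffset a l ≤ t) (hl' : t < pendOffset a l + a l) : k = l := by
  rcases lt_trichotomy k l with h | h | h
  · have := pendOffset_add_le_pendOffset a h; omega
  · exact h
  · have := pendOffset_add_le_pendOffset a h; omega

end pendOffset

def pendantsAt (n p : ℕ) (a : Fin (n - p) → ℕ) (k : Fin (n - p)) : Finset (Fin n) :=
  {j | n - p ≤ j.val ∧ pendOffset a k ≤ j.val - (n - p) ∧ j.val - (n - p) < pendOffset a k + a k}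

abbrev cliqueEmb (n p : ℕ) : Fin (n - p) ↪ Fin n := Fin.castLEEmb (Nat.sub_le n p)

section Sgraph
variable {n p : ℕ} (a : Fin (n - p) → ℕ)

lemma Sgraph_adj_iff (i j : Fin n) :
    (Sgraph n p a).Adj i j ↔ i ≠ j ∧ ((i.val < n - p ∧ j.val < n - p) ∨
      (∃ k, i = cliqueEmb n p k ∧ j ∈ pendantsAt n p a k) ∨
      (∃ k, j = cliqueEmb n p k ∧ i ∈ pendantsAt n p a k)) := by
  have hval (x : Fin n) (k : Fin (n - p)) : x = cliqueEmb n p k ↔ x.val = k.val := Fin.ext_iff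
  simp only [Sgraph, fromRel_adj, pendantsAt, mem_filter, mem_univ, true_and, hval]
  constructor
  · rintro ⟨hne, (h | h) | (h | h)⟩
    exacts [⟨hne, .inl h⟩, ⟨hne, .inr (.inl h)⟩, ⟨hne, .inl h.symm⟩, ⟨hne, .inr (.inr h)⟩]
  · rintro ⟨hne, h | h | h⟩
    exacts [⟨hne, .inl (.inl h)⟩, ⟨hne, .inl (.inr h)⟩, ⟨hne, .inr (.inr h)⟩]

lemma cliqueEmb_notMem_pendantsAt (k l : Fin (n - p)) :
    cliqueEmb n p l ∉ pendantsAt n p a k := fun h => by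
  have hq := (mem_filter.mp h).2.1
  simp only [Fin.coe_castLEEmb, Fin.val_castLE] at hq
  omega

lemma eq_of_mem_pendantsAt {k l : Fin (n - p)} {j : Fin n} (hk : j ∈ pendantsAt n p a k)
    (hl : j ∈ pendantsAt n p a l) : k = l := by
  simp only [pendantsAt, mem_filter, mem_univ, true_and] at hk hl
  exact eq_of_pendOffset_le_of_lt a hk.2.1 hk.2.2 hl.2.1 hl.2.2

lemma neighborFinset_cliqueEmb (k : Fin (n - p)) :
    (Sgraph n p a).neighborFinset (cliqueEmb n p k) =
      (univ.erase k).map (cliqueEmb n p) ∪ pendantsAt n p a k := by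
  ext j
  rw [mem_neighborFinset, Sgraph_adj_iff, mem_union, mem_map]
  constructor
  · rintro ⟨hne, ⟨-, hj⟩ | ⟨k', he, hj⟩ | ⟨k', rfl, hk⟩⟩
    · exact .inl ⟨⟨j, hj⟩, mem_erase.mpr ⟨fun h => hne (by rw [← h]; rfl), mem_univ _⟩, rfl⟩
    · exact .inr ((cliqueEmb n p).injective he ▸ hj)
    · exact absurd hk (cliqueEmb_notMem_pendantsAt a _ _)
  · rintro (⟨l, hl, rfl⟩ | hj)
    · refine ⟨fun h => (mem_erase.mp hl).1 ((cliqueEmb n p).injective h).symm, .inl ?_⟩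
      simp
    · exact ⟨fun h => cliqueEmb_notMem_pendantsAt a k k (h ▸ hj), .inr (.inl ⟨k, rfl, hj⟩)⟩

lemma neighborFinset_of_mem_pendantsAt {k : Fin (n - p)} {j : Fin n}
    (hj : j ∈ pendantsAt n p a k) : (Sgraph n p a).neighborFinset j = {cliqueEmb n p k} := by
  ext i
  rw [mem_neighborFinset, Sgraph_adj_iff, mem_singleton]
  constructor
  · rintro ⟨-, ⟨hj', -⟩ | ⟨k', rfl, -⟩ | ⟨k', rfl, hk'⟩⟩
    · have := (mem_filter.mp hj).2.1
      omega
    · exact absurd hj (cliqueEmb_notMem_pendantsAt a _ _)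
    · rw [eq_of_mem_pendantsAt a hk' hj]
  · rintro rfl
    exact ⟨fun h => cliqueEmb_notMem_pendantsAt a k k (h ▸ hj), .inr (.inr ⟨k, rfl, hj⟩)⟩

lemma map_valEmbedding_pendantsAt (hle : ∑ k, a k ≤ p) (k : Fin (n - p)) :
    (pendantsAt n p a k).map Fin.valEmbedding =
      Ico (n - p + pendOffset a k) (n - p + pendOffset a k + a k) := by
  have hk := pendOffset_add_le_sum a k
  have := k.isLt
  ext m
  simp only [pendantsAt, mem_map, mem_filter, mem_univ, true_and, Fin.valEmbedding_apply,
    mem_Ico]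
  constructor
  · rintro ⟨j, hj, rfl⟩
    omega
  · intro hm
    exact ⟨⟨m, by omega⟩, by simp only; omega, rfl⟩

lemma card_pendantsAt (hle : ∑ k, a k ≤ p) (k : Fin (n - p)) :
    #(pendantsAt n p a k) = a k := by
  rw [← card_map Fin.valEmbedding, map_valEmbedding_pendantsAt a hle, Nat.card_Ico]
  omega

lemma disjoint_map_cliqueEmb_pendantsAt (s : Finset (Fin (n - p))) (k : Fin (n - p)) :
    Disjoint (s.map (cliqueEmb n p)) (pendantsAt n p a k) := by
  rw [Finset.disjoint_left]
  rintro _ hj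
  obtain ⟨l, -, rfl⟩ := mem_map.mp hj
  exact cliqueEmb_notMem_pendantsAt a k l

lemma degree_cliqueEmb (hle : ∑ k, a k ≤ p) (k : Fin (n - p)) :
    (Sgraph n p a).degree (cliqueEmb n p k) = n - p - 1 + a k := by
  rw [← card_neighborFinset_eq_degree, neighborFinset_cliqueEmb,
    card_union_of_disjoint (disjoint_map_cliqueEmb_pendantsAt a _ k), card_map,
    card_erase_of_mem (mem_univ _), card_univ, Fintype.card_fin, card_pendantsAt a hle]

lemma degree_of_mem_pendantsAt {k : Fin (n - p)} {j : Fin n} (hj : j ∈ pendantsAt n p a k) :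
    (Sgraph n p a).degree j = 1 := by
  rw [← card_neighborFinset_eq_degree, neighborFinset_of_mem_pendantsAt a hj, card_singleton]

lemma pairwiseDisjoint_pendantsAt :
    ((univ : Finset (Fin (n - p))) : Set (Fin (n - p))).PairwiseDisjoint (pendantsAt n p a) :=
  fun _ _ _ _ hkl => Finset.disjoint_left.mpr fun _ hk hl => hkl (eq_of_mem_pendantsAt a hk hl)

lemma compl_map_cliqueEmb (hsum : ∑ k, a k = p) :
    (univ.map (cliqueEmb n p))ᶜ = univ.biUnion (pendantsAt n p a) := by
  symm
  refine eq_of_subset_of_card_le ?_ ?_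
  · intro j hj
    obtain ⟨k, -, hk⟩ := mem_biUnion.mp hj
    rw [mem_compl, mem_map]
    rintro ⟨l, -, rfl⟩
    exact cliqueEmb_notMem_pendantsAt a k l hk
  · rw [card_compl, card_map, card_univ, Fintype.card_fin, Fintype.card_fin,
      card_biUnion (pairwiseDisjoint_pendantsAt a)]
    simp only [card_pendantsAt a hsum.le, hsum]
    omega

lemma sum_eusWeight_cliqueEmb (hle : ∑ k, a k ≤ p) (k : Fin (n - p)) :
    ∑ w ∈ (Sgraph n p a).neighborFinset (cliqueEmb n p k),
        eusWeight (Sgraph n p a) s(cliqueEmb n p k, w) =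
      ∑ l ∈ univ.erase k, eusTerm ((n - p - 1 : ℕ) + a k) ((n - p - 1 : ℕ) + a l) +
        a k * eusTerm ((n - p - 1 : ℕ) + a k) 1 := by
  rw [neighborFinset_cliqueEmb, sum_union (disjoint_map_cliqueEmb_pendantsAt a _ k), sum_map]
  congr 1
  · refine sum_congr rfl fun l _ => ?_
    rw [eusWeight_mk, degree_cliqueEmb a hle, degree_cliqueEmb a hle]
    simp only [Nat.cast_add]
  · rw [sum_congr rfl fun j hj => by
      rw [eusWeight_mk, degree_cliqueEmb a hle, degree_of_mem_pendantsAt a hj]]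
    rw [sum_const, card_pendantsAt a hle, nsmul_eq_mul]
    simp only [Nat.cast_add, Nat.cast_one]

lemma sum_pendantsAt_sum_eusWeight (hle : ∑ k, a k ≤ p) (k : Fin (n - p)) :
    ∑ j ∈ pendantsAt n p a k, ∑ w ∈ (Sgraph n p a).neighborFinset j,
        eusWeight (Sgraph n p a) s(j, w) =
      a k * eusTerm ((n - p - 1 : ℕ) + a k) 1 := by
  rw [sum_congr rfl fun j hj => by
    rw [neighborFinset_of_mem_pendantsAt a hj, sum_singleton, eusWeight_mk,
      degree_cliqueEmb a hle, degree_of_mem_pendantsAt a hj, eusTerm_comm]]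
  rw [sum_const, card_pendantsAt a hle, nsmul_eq_mul]
  simp only [Nat.cast_add, Nat.cast_one]

theorem EUS_Sgraph (hsum : ∑ k, a k = p) :
    EUS (Sgraph n p a) = sgraphEUS ((n - p - 1 : ℕ) : ℝ) (fun k => (a k : ℝ)) := by
  have h := (Sgraph n p a).sum_sum_neighborFinset_eq_two_nsmul (eusWeight (Sgraph n p a))
  rw [← sum_add_sum_compl (univ.map (cliqueEmb n p)), sum_map, compl_map_cliqueEmb a hsum,
    sum_biUnion (pairwiseDisjoint_pendantsAt a)] at h
  simp only [sum_eusWeight_cliqueEmb a hsum.le, sum_pendantsAt_sum_eusWeight a hsum.le,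
    sum_add_distrib, nsmul_eq_mul, Nat.cast_ofNat] at h
  rw [sgraphEUS, EUS]
  linarith
end Sgraph

theorem eus_Sgraph_shift_general (n p : ℕ)
    (a : Fin (n - p) → ℕ) (hsum : ∑ k, a k = p)
    (u v : Fin (n - p)) (huv : u ≠ v)
    (hmax : ∀ k, a k ≤ a u) (hv : 1 ≤ a v) :
    EUS (Sgraph n p a) <
      EUS (Sgraph n p (Function.update (Function.update a u (a u + 1)) v (a v - 1))) := by
  set a' := Function.update (Function.update a u (a u + 1)) v (a v - 1)
  have ha'u : a' u = a u + 1 := by simp [a', huv]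
  have ha'v : a' v = a v - 1 := by simp [a']
  have ha'rest : ∀ k ∈ ({u, v} : Finset _)ᶜ, a' k = a k := fun k hk => by
    simp only [mem_compl, mem_insert, mem_singleton, not_or] at hk
    simp [a', hk.1, hk.2]
  have hsum' : ∑ k, a' k = p := by
    rw [sum_eq_add_add_sum_compl_pair huv] at hsum ⊢
    have hrest : ∑ k ∈ {u, v}ᶜ, a' k = ∑ k ∈ {u, v}ᶜ, a k := sum_congr rfl ha'rest
    omega
  rw [EUS_Sgraph a hsum, EUS_Sgraph a' hsum']
  refine sgraphEUS_lt_of_shift (Nat.cast_nonneg _) huv (by simp [ha'u]) ?_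
    (fun k hk => by simp only [ha'rest k hk]) (by exact_mod_cast hmax v) (by exact_mod_cast hv)
  rw [ha'v, Nat.cast_sub hv, Nat.cast_one]

/-- Let `n > p ≥ 1` with `n - p ≥ 2`, and let `a : Fin (n-p) → ℕ` with `∑ a = p` and
`a u = max_k a k < p`. If `a v ≥ 1` for some `v ≠ u`, and `a'` is obtained from `a` by
increasing `a u` by one and decreasing `a v` by one, then
`EUS(S(a')) > EUS(S(a))`. -/
theorem eus_Sgraph_shift (n p : ℕ) (hp : 1 ≤ p) (hnp : p + 2 ≤ n)
    (a : Fin (n - p) → ℕ) (hsum : ∑ k, a k = p)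
    (u v : Fin (n - p)) (huv : u ≠ v)
    (hmax : ∀ k, a k ≤ a u) (hlt : a u < p) (hv : 1 ≤ a v) :
    EUS (Sgraph n p a) <
      EUS (Sgraph n p (Function.update (Function.update a u (a u + 1)) v (a v - 1))) :=
  eus_Sgraph_shift_general n p a hsum u v huv hmax hv
end
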